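/- (Risk–energy equivalence underlying Proposition 2.) Let S = {(x_i, y_i)}_{i=1}^N with N > 0, let ρ be a d × d complex matrix with Tr(ρ) = 1, and let O(x_i) be d × d complex matrices with Tr(ρ O(x_i)) ∈ ℝ for each i. Define the empirical risk R = (1/N) Σ_{i=1}^N (Tr(ρ O(x_i)) − y_i)² and the d² × d² matrix H(S) = (1/N) Σ_{i=1}^N (O(x_i) − y_i I) ⊗ (O(x_i) − y_i I), where ⊗ is the Kronecker product and I the d × d identity. Then R = Tr((ρ ⊗ ρ) H(S)). -/
import Mathlib


open Kronecker

/-- **Risk–energy equivalence.** With `Tr(ρ) = 1` and each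
`Tr(ρ O(x_i))` real, the empirical risk
`R = (1/N) Σ_i (Tr(ρ O(x_i)) − y_i)²` equals `Tr((ρ ⊗ ρ) H(S))` for
`H(S) = (1/N) Σ_i (O(x_i) − y_i I) ⊗ (O(x_i) − y_i I)`. -/
theorem risk_eq_energy_of_data_hamiltonian
    {X : Type*} (N d : ℕ) (hN : 0 < N)
    (x : Fin N → X) (y : Fin N → ℝ)
    (ρ : Matrix (Fin d) (Fin d) ℂ) (O : X → Matrix (Fin d) (Fin d) ℂ)
    (hρ : Matrix.trace ρ = 1)
    (hreal : ∀ i, (Matrix.trace (ρ * O (x i))).im = 0) :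
    (1 / (N : ℂ)) * ∑ i, (Matrix.trace (ρ * O (x i)) - (y i : ℂ)) ^ 2 =
      Matrix.trace ((ρ ⊗ₖ ρ) *
        ((1 / (N : ℂ)) • ∑ i,
          (O (x i) - (y i : ℂ) • (1 : Matrix (Fin d) (Fin d) ℂ)) ⊗ₖ
            (O (x i) - (y i : ℂ) • (1 : Matrix (Fin d) (Fin d) ℂ)))) := by
  rw [Matrix.mul_smul, Matrix.trace_smul, Finset.mul_sum, Matrix.mul_sum, smul_eq_mul,
    Matrix.trace_sum, Finset.mul_sum]
  refine Finset.sum_congr rfl fun i _ => ?_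
  congr 1
  rw [← Matrix.mul_kronecker_mul, Matrix.trace_kronecker]
  have : Matrix.trace (ρ * (O (x i) - (y i : ℂ) • (1 : Matrix (Fin d) (Fin d) ℂ))) =
      Matrix.trace (ρ * O (x i)) - (y i : ℂ) := by
    rw [Matrix.mul_sub, Matrix.trace_sub, Matrix.mul_smul, Matrix.mul_one,
      Matrix.trace_smul, smul_eq_mul, hρ, mul_one]
  rw [this, sq]
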